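/- arXiv:2407.15505 — 4 statements merged into one kernel-verified Lean document; each statement's English description precedes it below -/
import Mathlib

section
/- Let g ∈ L¹_loc(0,∞) be nonnegative and non-increasing, let T > 0, and let v ∈ C([0,T]) be such that D_{(g)}v(t) = ∫₀ᵗ g(t-τ) v'(τ) dτ exists and is continuous on (0,T], with v differentiable on (0,T). If t₀ ∈ (0,T] is a point where v attains its maximum over [0,T], then D_{(g)}v(t₀) ≥ 0. -/
open MeasureTheory Real Set

/-- Extremum principle for the generalized Caputo-type derivative: if `g` is a
nonnegative non-increasing locally integrable kernel, `v ∈ C([0,T])` is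
differentiable on `(0,T)` and `D_{(g)}v(t) = ∫₀ᵗ g(t-τ) v'(τ) dτ` is continuous
on `(0,T]`, then at any maximum point `t₀ ∈ (0,T]` of `v` over `[0,T]` we have
`D_{(g)}v(t₀) ≥ 0`. -/
theorem caputo_extremum_principle_max
    (g : ℝ → ℝ) (hg_nonneg : ∀ t : ℝ, 0 < t → 0 ≤ g t)
    (hg_mono : AntitoneOn g (Set.Ioi (0:ℝ)))
    (hg_int : LocallyIntegrableOn g (Set.Ioi (0:ℝ)))
    (T : ℝ) (hT : 0 < T)
    (v : ℝ → ℝ) (hv_cont : ContinuousOn v (Set.Icc 0 T))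
    (hv_diff : ∀ t ∈ Set.Ioo (0:ℝ) T, DifferentiableAt ℝ v t)
    (Dv : ℝ → ℝ)
    (hDv : ∀ t ∈ Set.Ioc (0:ℝ) T,
      Dv t = ∫ τ in (0:ℝ)..t, g (t - τ) * deriv v τ)
    (hDv_int : ∀ t ∈ Set.Ioc (0:ℝ) T,
      IntervalIntegrable (fun τ => g (t - τ) * deriv v τ) volume 0 t)
    (hDv_cont : ContinuousOn Dv (Set.Ioc (0:ℝ) T))
    (t₀ : ℝ) (ht₀ : t₀ ∈ Set.Ioc (0:ℝ) T)
    (hmax : IsMaxOn v (Set.Icc 0 T) t₀) :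
    0 ≤ Dv t₀ := by
  obtain ⟨ht₀0, ht₀T⟩ := ht₀
  set h : ℝ → ℝ := fun u => deriv v (t₀ - u) with hh
  have hhm : Measurable h := (measurable_deriv v).comp (measurable_const.sub measurable_id)
  set μ : Measure ℝ := volume.restrict (Set.Ioc (0:ℝ) t₀) with hμ
  set ν : Measure ℝ := volume.restrict (Set.Ioi (0:ℝ)) with hν
  -- rewrite Dv t₀ as a set integral
  have key : Dv t₀ = ∫ u, g u * h u ∂μ := by
    rw [hDv t₀ ⟨ht₀0, ht₀T⟩]
    have e : (fun τ => g (t₀ - τ) * deriv v τ) = fun τ => (fun u => g u * h u) (t₀ - τ) := by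
      funext τ; simp [hh, sub_sub_cancel]
    rw [e, intervalIntegral.integral_comp_sub_left (fun u => g u * h u) t₀, sub_self, sub_zero,
      intervalIntegral.integral_of_le ht₀0.le]
  have hInt : IntegrableOn (fun u => g u * h u) (Set.Ioc 0 t₀) := by
    have h1 := (hDv_int t₀ ⟨ht₀0, ht₀T⟩).comp_sub_left t₀
    simp only [sub_sub_cancel, sub_zero, sub_self] at h1
    exact (intervalIntegrable_iff_integrableOn_Ioc_of_le ht₀0.le).mp h1.symm
  -- the two-variable function for the layer-cake argument
  set F : ℝ → ℝ → ℝ := fun u lam => if lam < g u then h u else 0 with hF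
  -- helper: ∫ over ν of a truncated constant
  have helper : ∀ (a c : ℝ), 0 ≤ a → (∫ lam, (if lam < a then c else 0) ∂ν) = a * c := by
    intro a c ha
    have e : (fun lam => if lam < a then c else 0) = (Set.Iio a).indicator (fun _ => c) := by
      funext lam; simp [Set.indicator_apply]
    rw [e, integral_indicator measurableSet_Iio, setIntegral_const,
      measureReal_def, hν, Measure.restrict_apply measurableSet_Iio, Set.Iio_inter_Ioi, Real.volume_Ioo, sub_zero,
      ENNReal.toReal_ofReal ha, smul_eq_mul]
  have step1 : ∀ u ∈ Set.Ioc (0:ℝ) t₀, (∫ lam, F u lam ∂ν) = g u * h u :=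
    fun u hu => helper (g u) (h u) (hg_nonneg u hu.1)
  -- measurability of (uncurry F)
  have hgae : AEMeasurable g ν := aemeasurable_restrict_of_antitoneOn measurableSet_Ioi hg_mono
  obtain ⟨g', hg'm, hgg'⟩ := hgae
  have hgg'μ : g =ᵐ[μ] g' := by
    rw [hμ]; rw [hν] at hgg'
    exact ae_restrict_of_ae_restrict_of_subset Set.Ioc_subset_Ioi_self hgg'
  have hFaesm : AEStronglyMeasurable (Function.uncurry F) (μ.prod ν) := by
    refine ⟨fun p => if p.2 < g' p.1 then h p.1 else 0, ?_, ?_⟩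
    · have hset : MeasurableSet {p : ℝ × ℝ | p.2 < g' p.1} :=
        measurableSet_lt measurable_snd (hg'm.comp measurable_fst)
      exact (Measurable.ite hset (hhm.comp measurable_fst) measurable_const).stronglyMeasurable
    · -- a.e. equality on the product
      have hB : (μ.prod ν) {p : ℝ × ℝ | g p.1 ≠ g' p.1} = 0 := by
        have hBμ : μ {x | g x ≠ g' x} = 0 := hgg'μ
        obtain ⟨B', hBB', hB'm, hB'0⟩ := exists_measurable_superset_of_null hBμ
        refine measure_mono_null (fun p hp => ?_) (?_ : (μ.prod ν) (B' ×ˢ Set.univ) = 0)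
        · exact ⟨hBB' hp, Set.mem_univ _⟩
        · rw [Measure.prod_prod, hB'0, zero_mul]
      refine measure_mono_null (fun p hp => ?_) hB
      intro hpe
      exact hp (by simp only [Set.mem_setOf_eq, Function.uncurry, hF, hpe])
  -- integrability of (uncurry F)
  have hFint : Integrable (Function.uncurry F) (μ.prod ν) := by
    rw [MeasureTheory.integrable_prod_iff hFaesm]
    constructor
    · rw [hμ]
      filter_upwards [ae_restrict_mem measurableSet_Ioc] with u hu
      have e : (fun lam => Function.uncurry F (u, lam)) = (Set.Iio (g u)).indicator (fun _ => h u) := by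
        funext lam; simp [Function.uncurry, hF, Set.indicator_apply]
      rw [e, integrable_indicator_iff measurableSet_Iio]
      rw [IntegrableOn, hν, Measure.restrict_restrict measurableSet_Iio, Set.Iio_inter_Ioi]
      exact integrableOn_const measure_Ioo_lt_top.ne
    · have e : (fun u => ∫ lam, ‖Function.uncurry F (u, lam)‖ ∂ν) =ᵐ[μ] fun u => ‖g u * h u‖ := by
        rw [hμ]
        filter_upwards [ae_restrict_mem measurableSet_Ioc] with u hu
        have hgu := hg_nonneg u hu.1
        have e2 : (fun lam => ‖Function.uncurry F (u, lam)‖)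
            = fun lam => if lam < g u then ‖h u‖ else 0 := by
          funext lam
          simp only [Function.uncurry, hF]
          split <;> simp
        rw [e2, helper (g u) ‖h u‖ hgu, norm_mul, Real.norm_eq_abs (g u), abs_of_nonneg hgu]
      exact hInt.norm.congr e.symm
  -- positivity of the λ-slices
  have step4 : ∀ lam : ℝ, 0 < lam → 0 ≤ ∫ u, F u lam ∂μ := by
    intro lam hlam
    by_cases hne : ∃ u ∈ Set.Ioc (0:ℝ) t₀, lam < g u
    · obtain ⟨u₀, hu₀, hgu₀⟩ := hne
      set S := {u ∈ Set.Ioc (0:ℝ) t₀ | lam < g u} with hS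
      have hbdd : BddAbove S := ⟨t₀, fun x hx => hx.1.2⟩
      have hSne : S.Nonempty := ⟨u₀, ⟨hu₀, hgu₀⟩⟩
      set c := sSup S with hc
      have hc0 : 0 < c := lt_of_lt_of_le hu₀.1 (le_csSup hbdd ⟨hu₀, hgu₀⟩)
      have hct₀ : c ≤ t₀ := csSup_le hSne (fun x hx => hx.1.2)
      have hIooS : Set.Ioo 0 c ⊆ S := by
        intro x hx
        obtain ⟨s, hsS, hxs⟩ := exists_lt_of_lt_csSup hSne hx.2
        exact ⟨⟨hx.1, (hx.2.le.trans hct₀)⟩,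
          lt_of_lt_of_le hsS.2 (hg_mono (Set.mem_Ioi.2 hx.1) (Set.mem_Ioi.2 hsS.1.1) hxs.le)⟩
      have hcongr : (fun u => F u lam) =ᵐ[μ] (Set.Ioo 0 c).indicator h := by
        have h1 : ∀ᵐ u ∂μ, u ≠ c := by
          rw [hμ]
          refine ae_restrict_of_ae ?_
          refine ae_iff.2 ?_
          simpa using measure_singleton c
        rw [hμ] at h1 ⊢
        filter_upwards [ae_restrict_mem measurableSet_Ioc, h1] with u hu hune
        by_cases hmem : lam < g u
        · have huS : u ∈ S := ⟨hu, hmem⟩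
          have hu' : u ∈ Set.Ioo 0 c := ⟨hu.1, lt_of_le_of_ne (le_csSup hbdd huS) hune⟩
          simp [hF, hmem, Set.indicator_of_mem hu']
        · have hu' : u ∉ Set.Ioo 0 c := fun hmem' => hmem (hIooS hmem').2
          simp [hF, hmem, Set.indicator_of_notMem hu']
      have hInter : Set.Ioo 0 c ∩ Set.Ioc 0 t₀ = Set.Ioo 0 c :=
        Set.inter_eq_left.2 (fun x hx => ⟨hx.1, hx.2.le.trans hct₀⟩)
      rw [integral_congr_ae hcongr, integral_indicator measurableSet_Ioo, hμ,
        Measure.restrict_restrict measurableSet_Ioo, hInter]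
      -- integrability of h on Ioo 0 c
      have hInth : IntegrableOn h (Set.Ioo 0 c) := by
        have hsub : Set.Ioo 0 c ⊆ Set.Ioc 0 t₀ := fun x hx => ⟨hx.1, hx.2.le.trans hct₀⟩
        have hb : IntegrableOn (fun u => lam⁻¹ * ‖g u * h u‖) (Set.Ioo 0 c) :=
          (MeasureTheory.IntegrableOn.mono_set hInt.norm hsub).const_mul _
        refine hb.mono' (hhm.aestronglyMeasurable.restrict) ?_
        filter_upwards [ae_restrict_mem measurableSet_Ioo] with u hu
        have hgu : lam < g u := (hIooS hu).2
        have h0 : (0:ℝ) < g u := hlam.trans hgu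
        have e1 : lam⁻¹ * ‖g u * h u‖ = lam⁻¹ * (g u * ‖h u‖) := by
          rw [norm_mul, Real.norm_eq_abs (g u), abs_of_nonneg h0.le]
        rw [e1]
        have : lam * ‖h u‖ ≤ g u * ‖h u‖ := mul_le_mul_of_nonneg_right hgu.le (norm_nonneg _)
        calc ‖h u‖ = lam⁻¹ * (lam * ‖h u‖) := by field_simp
          _ ≤ lam⁻¹ * (g u * ‖h u‖) := by
              exact mul_le_mul_of_nonneg_left this (inv_nonneg.2 hlam.le)
      have hiv : IntervalIntegrable (deriv v) volume (t₀ - c) t₀ := by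
        have h1 : IntervalIntegrable h volume 0 c :=
          (intervalIntegrable_iff_integrableOn_Ioc_of_le hc0.le).2
            ((integrableOn_Ioc_iff_integrableOn_Ioo (by simp)).2 hInth)
        have h2 := h1.comp_sub_left t₀
        simp only [hh, sub_zero, sub_sub_cancel] at h2
        exact h2.symm
      have hftc : ∫ x in (t₀ - c)..t₀, deriv v x = v t₀ - v (t₀ - c) := by
        apply intervalIntegral.integral_eq_sub_of_hasDeriv_right_of_le (by linarith)
          ?_ ?_ hiv
        · exact hv_cont.mono (fun x hx => ⟨by linarith [hx.1], by linarith [hx.2]⟩)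
        · intro x hx
          exact ((hv_diff x ⟨by linarith [hx.1], by linarith [hx.2]⟩).hasDerivAt).hasDerivWithinAt
      have : ∫ u in Set.Ioo 0 c, h u = v t₀ - v (t₀ - c) := by
        rw [← integral_Ioc_eq_integral_Ioo, ← intervalIntegral.integral_of_le hc0.le]
        rw [show (∫ u in (0:ℝ)..c, h u) = ∫ u in (0:ℝ)..c, deriv v (t₀ - u) from rfl]
        rw [intervalIntegral.integral_comp_sub_left (deriv v) t₀, sub_zero, hftc]
      rw [this]
      have : v (t₀ - c) ≤ v t₀ := hmax ⟨by linarith, by linarith⟩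
      linarith
    · push_neg at hne
      have e : (fun u => F u lam) =ᵐ[μ] (fun _ => (0:ℝ)) := by
        rw [hμ]
        filter_upwards [ae_restrict_mem measurableSet_Ioc] with u hu
        simp [hF, not_lt.2 (hne u hu)]
      rw [integral_congr_ae e, integral_zero]
  -- put things together
  rw [key]
  have e1 : (∫ u, g u * h u ∂μ) = ∫ u, (∫ lam, F u lam ∂ν) ∂μ := by
    refine integral_congr_ae ?_
    rw [hμ]
    filter_upwards [ae_restrict_mem measurableSet_Ioc] with u hu
    exact (step1 u hu).symm
  rw [e1, MeasureTheory.integral_integral_swap hFint]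
  refine integral_nonneg_of_ae ?_
  rw [hν]
  filter_upwards [ae_restrict_mem measurableSet_Ioi] with lam hlam
  exact step4 lam hlam
end

section
/- Under the same hypotheses as the maximum case, if t₀ ∈ (0,T] is a point where v attains its minimum over [0,T], then D_{(g)}v(t₀) ≤ 0. -/
open MeasureTheory Real Set

lemma caputo_aux_min
    (g : ℝ → ℝ) (hg_nonneg : ∀ t : ℝ, 0 < t → 0 ≤ g t)
    (hg_mono : AntitoneOn g (Set.Ioi (0:ℝ)))
    (T : ℝ)
    (v : ℝ → ℝ) (hv_cont : ContinuousOn v (Set.Icc 0 T))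
    (hv_diff : ∀ t ∈ Set.Ioo (0:ℝ) T, DifferentiableAt ℝ v t)
    (t₀ : ℝ) (ht₀ : t₀ ∈ Set.Ioc (0:ℝ) T)
    (hmin : IsMinOn v (Set.Icc 0 T) t₀)
    (b : ℝ) (hb : b ∈ Set.Ioo (0:ℝ) t₀)
    (hf : IntegrableOn (fun τ => g (t₀ - τ) * deriv v τ) (Set.Ioo b t₀) volume) :
    ∫ τ in Set.Ioo b t₀, g (t₀ - τ) * deriv v τ ≤ 0 := by
  obtain ⟨ht₀pos, ht₀T⟩ := ht₀
  obtain ⟨hb0, hbt₀⟩ := hb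
  set h : ℝ → ℝ := deriv v with hh
  have hmeas_h : Measurable h := measurable_deriv v
  set c : ℝ := g (t₀ - b) with hc_def
  have hc0 : 0 ≤ c := hg_nonneg _ (by linarith)
  -- φ τ = g (t₀ - τ) is ≥ c and monotone on (b, t₀)
  have hφc : ∀ τ ∈ Set.Ioo b t₀, c ≤ g (t₀ - τ) := by
    intro τ hτ
    exact hg_mono (mem_Ioi.2 (by linarith [hτ.2])) (mem_Ioi.2 (by linarith))
      (by linarith [hτ.1])
  have hφmono : ∀ x ∈ Set.Ioo b t₀, ∀ τ ∈ Set.Ioo b t₀, x ≤ τ →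
      g (t₀ - x) ≤ g (t₀ - τ) := by
    intro x hx τ hτ hxτ
    exact hg_mono (mem_Ioi.2 (by linarith [hτ.2])) (mem_Ioi.2 (by linarith [hx.2]))
      (by linarith)
  -- the level sets and the "jump position" function
  set S : ℝ → Set ℝ := fun l => {x ∈ Set.Ioo b t₀ | c + l < g (t₀ - x)} with hS
  set a : ℝ → ℝ := fun l => sInf (insert t₀ (S l)) with ha
  have hbdd : ∀ l, BddBelow (insert t₀ (S l)) := by
    intro l
    refine ⟨b, ?_⟩
    rintro x (rfl | hx)
    · linarith
    · exact hx.1.1.le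
  have ha_lb : ∀ l, b ≤ a l := by
    intro l
    refine le_csInf ⟨t₀, mem_insert _ _⟩ ?_
    rintro x (rfl | hx)
    · linarith
    · exact hx.1.1.le
  have ha_ub : ∀ l, a l ≤ t₀ := fun l => csInf_le (hbdd l) (mem_insert _ _)
  have ha_mono : Monotone a := by
    intro l₁ l₂ hl
    refine csInf_le_csInf (hbdd l₁) ⟨t₀, mem_insert _ _⟩ ?_
    apply insert_subset_insert
    intro x hx
    exact ⟨hx.1, by linarith [hx.2]⟩
  have ha_meas : Measurable a := ha_mono.measurable
  -- the key equivalence off the graph of `a`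
  have hiff : ∀ l : ℝ, ∀ τ ∈ Set.Ioo b t₀, τ ≠ a l →
      (a l < τ ↔ c + l < g (t₀ - τ)) := by
    intro l τ hτ hne
    constructor
    · intro hlt
      obtain ⟨x, hx, hxτ⟩ := exists_lt_of_csInf_lt ⟨t₀, mem_insert _ _⟩ hlt
      rcases hx with rfl | hx
      · exact absurd hxτ (not_lt.2 hτ.2.le)
      · exact lt_of_lt_of_le hx.2 (hφmono x hx.1 τ hτ hxτ.le)
    · intro hlt
      exact lt_of_le_of_ne (csInf_le (hbdd l) (mem_insert_of_mem _ ⟨hτ, hlt⟩))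
        (Ne.symm hne)

  -- measures and the two kernels
  set ν : Measure ℝ := volume.restrict (Set.Ioo b t₀) with hν
  set ρ : Measure ℝ := volume.restrict (Set.Ioi (0:ℝ)) with hρ
  set μ : Measure (ℝ × ℝ) := ν.prod ρ with hμ
  classical
  set k : ℝ × ℝ → ℝ := fun p => if a p.2 < p.1 then h p.1 else 0 with hk
  set k' : ℝ × ℝ → ℝ := fun p => if c + p.2 < g (t₀ - p.1) then h p.1 else 0 with hk'
  have hk_meas : Measurable k := by
    apply Measurable.ite _ (hmeas_h.comp measurable_fst) measurable_const
    exact measurableSet_lt (ha_meas.comp measurable_snd) measurable_fst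
  -- the graph of `a` is null
  have hN_meas : MeasurableSet {p : ℝ × ℝ | p.1 = a p.2} :=
    measurableSet_eq_fun measurable_fst (ha_meas.comp measurable_snd)
  have hN_null : μ {p : ℝ × ℝ | p.1 = a p.2} = 0 := by
    rw [hμ, Measure.prod_apply_symm hN_meas]
    have : ∀ l : ℝ, ν ((fun τ => (τ, l)) ⁻¹' {p : ℝ × ℝ | p.1 = a p.2}) = 0 := by
      intro l
      have hset : ((fun τ => (τ, l)) ⁻¹' {p : ℝ × ℝ | p.1 = a p.2}) = {a l} := by
        ext τ; simp [Set.mem_preimage]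
      rw [hset]
      exact le_antisymm ((Measure.restrict_le_self _).trans_eq (measure_singleton _))
        zero_le
    simp only [this, lintegral_zero]
  -- a.e. equality of the two kernels
  have hmem_rect : ∀ᵐ p ∂μ, p ∈ (Set.Ioo b t₀) ×ˢ (Set.Ioi (0:ℝ)) := by
    rw [hμ, hν, hρ, Measure.prod_restrict]
    exact ae_restrict_mem (measurableSet_Ioo.prod measurableSet_Ioi)
  have hkk' : k =ᵐ[μ] k' := by
    have hcompl : ∀ᵐ p ∂μ, p ∉ {p : ℝ × ℝ | p.1 = a p.2} :=
      (ae_iff.2 (by simpa using hN_null))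
    filter_upwards [hmem_rect, hcompl] with p hp hpN
    have hp1 : p.1 ∈ Set.Ioo b t₀ := hp.1
    have hne : p.1 ≠ a p.2 := hpN
    simp only [hk, hk']
    exact if_congr (hiff p.2 p.1 hp1 hne) rfl rfl

  -- integrability of k on the product
  have hknn : (fun p => (‖k p‖₊ : ENNReal)) =ᵐ[μ] (fun p => (‖k' p‖₊ : ENNReal)) :=
    hkk'.fun_comp fun x => (‖x‖₊ : ENNReal)
  have hk'_aemeas : AEMeasurable (fun p => (‖k' p‖₊ : ENNReal)) μ :=
    (hk_meas.nnnorm.coe_nnreal_ennreal).aemeasurable.congr hknn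
  have hfin : ∫⁻ p, (‖k p‖₊ : ENNReal) ∂μ < ⊤ := by
    rw [lintegral_congr_ae hknn, hμ, lintegral_prod _ hk'_aemeas]
    have hbound : ∀ᵐ τ ∂ν, (∫⁻ l, (‖k' (τ, l)‖₊ : ENNReal) ∂ρ)
        ≤ (‖g (t₀ - τ) * h τ‖₊ : ENNReal) := by
      rw [hν]
      filter_upwards [ae_restrict_mem measurableSet_Ioo] with τ hτ
      have hind : (fun l => (‖k' (τ, l)‖₊ : ENNReal))
          = (Set.Iio (g (t₀ - τ) - c)).indicator (fun _ => (‖h τ‖₊ : ENNReal)) := by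
        funext l
        simp only [hk', Set.indicator, Set.mem_Iio, lt_sub_iff_add_lt']
        by_cases hcase : c + l < g (t₀ - τ) <;> simp [hcase]
      rw [hind, lintegral_indicator measurableSet_Iio, setLIntegral_const, hρ,
        Measure.restrict_apply measurableSet_Iio]
      have hset : Set.Iio (g (t₀ - τ) - c) ∩ Set.Ioi 0 = Set.Ioo 0 (g (t₀ - τ) - c) := by
        ext x; simp [Set.mem_Ioo, and_comm]
      rw [hset, Real.volume_Ioo, sub_zero]
      calc (‖h τ‖₊ : ENNReal) * ENNReal.ofReal (g (t₀ - τ) - c)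
          ≤ (‖h τ‖₊ : ENNReal) * (‖g (t₀ - τ)‖₊ : ENNReal) := by
            apply mul_le_mul_right
            rw [← enorm_eq_nnnorm, Real.enorm_eq_ofReal (hg_nonneg _ (by linarith [hτ.2]))]
            exact ENNReal.ofReal_le_ofReal (by linarith)
        _ = (‖g (t₀ - τ) * h τ‖₊ : ENNReal) := by
            rw [nnnorm_mul, ENNReal.coe_mul, mul_comm]
    calc ∫⁻ τ, (∫⁻ l, (‖k' (τ, l)‖₊ : ENNReal) ∂ρ) ∂ν
        ≤ ∫⁻ τ, (‖g (t₀ - τ) * h τ‖₊ : ENNReal) ∂ν := lintegral_mono_ae hbound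
      _ < ⊤ := hf.2

  have hk_int : Integrable k μ := ⟨hk_meas.aestronglyMeasurable, hfin⟩
  -- Way 1: inner integral over l
  have hinner1 : ∀ᵐ τ ∂ν, (∫ l, k (τ, l) ∂ρ) = (g (t₀ - τ) - c) * h τ := by
    have hsec := Measure.ae_ae_of_ae_prod (hμ ▸ hkk')
    rw [hν] at hsec ⊢
    filter_upwards [ae_restrict_mem measurableSet_Ioo, hsec] with τ hτ hsecτ
    rw [integral_congr_ae hsecτ]
    have hind : (fun l => k' (τ, l))
        = (Set.Iio (g (t₀ - τ) - c)).indicator (fun _ => h τ) := by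
      funext l
      simp only [hk', Set.indicator, Set.mem_Iio, lt_sub_iff_add_lt']
    rw [hind, integral_indicator measurableSet_Iio, hρ,
      Measure.restrict_restrict measurableSet_Iio]
    have hset : Set.Iio (g (t₀ - τ) - c) ∩ Set.Ioi 0 = Set.Ioo 0 (g (t₀ - τ) - c) := by
      ext x; simp [Set.mem_Ioo, and_comm]
    rw [hset, setIntegral_const, Real.volume_real_Ioo_of_le (by linarith [hφc τ hτ]), sub_zero,
      smul_eq_mul]
  have hW1 : ∫ p, k p ∂μ = ∫ τ in Set.Ioo b t₀, (g (t₀ - τ) - c) * h τ := by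
    rw [hμ, integral_prod _ hk_int, ← hν]
    exact integral_congr_ae hinner1
  -- Way 2: inner integral over τ is ≤ 0 for a.e. l
  have hW2 : ∫ p, k p ∂μ ≤ 0 := by
    rw [hμ, integral_prod_symm _ hk_int]
    apply integral_nonpos_of_ae
    filter_upwards [hk_int.prod_left_ae] with l hl
    simp only [Pi.zero_apply]
    have hind : (fun τ => k (τ, l)) = (Set.Ioi (a l)).indicator h := by
      funext τ
      simp only [hk, Set.indicator, Set.mem_Ioi]
    have hres : ν.restrict (Set.Ioi (a l)) = volume.restrict (Set.Ioo (a l) t₀) := by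
      rw [hν, Measure.restrict_restrict measurableSet_Ioi]
      congr 1
      ext x
      constructor
      · rintro ⟨hx1, hx2⟩; exact ⟨hx1, hx2.2⟩
      · rintro ⟨hx1, hx2⟩; exact ⟨hx1, lt_of_le_of_lt (ha_lb l) hx1, hx2⟩
    have hval : (∫ τ, k (τ, l) ∂ν) = ∫ τ in Set.Ioo (a l) t₀, h τ := by
      rw [hind, integral_indicator measurableSet_Ioi, hres]
    rw [hval]
    rcases eq_or_lt_of_le (ha_ub l) with heq | hlt
    · simp [heq]
    · -- FTC on [a l, t₀]
      have hInt : IntegrableOn h (Set.Ioo (a l) t₀) volume := by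
        have := hl
        rw [hind, integrable_indicator_iff measurableSet_Ioi] at this
        rwa [IntegrableOn, hres] at this
      have hIntIoc : IntegrableOn h (Set.Ioc (a l) t₀) volume :=
        hInt.congr_set_ae Ioo_ae_eq_Ioc.symm
      have hII : IntervalIntegrable h volume (a l) t₀ :=
        (intervalIntegrable_iff_integrableOn_Ioc_of_le hlt.le).2 hIntIoc
      have hFTC : ∫ τ in (a l)..t₀, h τ = v t₀ - v (a l) := by
        apply intervalIntegral.integral_eq_sub_of_hasDeriv_right_of_le hlt.le
        · exact hv_cont.mono (Set.Icc_subset_Icc (by linarith [ha_lb l]) ht₀T)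
        · intro x hx
          exact ((hv_diff x ⟨by linarith [ha_lb l, hx.1], by linarith [hx.2]⟩
            ).hasDerivAt).hasDerivWithinAt
        · exact hII
      have : ∫ τ in Set.Ioo (a l) t₀, h τ = v t₀ - v (a l) := by
        rw [← integral_Ioc_eq_integral_Ioo, ← intervalIntegral.integral_of_le hlt.le, hFTC]
      rw [this]
      have hmem : a l ∈ Set.Icc (0:ℝ) T := ⟨by linarith [ha_lb l], by linarith [ha_ub l]⟩
      have := isMinOn_iff.mp hmin (a l) hmem
      linarith

  -- combine
  have hsub_int : Integrable (fun τ => (g (t₀ - τ) - c) * h τ) ν :=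
    (hk_int.integral_prod_left).congr hinner1
  have hf' : Integrable (fun τ => g (t₀ - τ) * h τ) ν := hf
  have hWle : ∫ τ in Set.Ioo b t₀, (g (t₀ - τ) - c) * h τ ≤ 0 := hW1 ▸ hW2
  rcases eq_or_lt_of_le hc0 with hc | hc
  · have : (fun τ => g (t₀ - τ) * h τ) = fun τ => (g (t₀ - τ) - c) * h τ := by
      funext τ; rw [← hc]; ring
    rw [show (∫ τ in Set.Ioo b t₀, g (t₀ - τ) * h τ)
        = ∫ τ in Set.Ioo b t₀, (g (t₀ - τ) - c) * h τ by rw [this]]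
    exact hWle
  · have hch : Integrable (fun τ => c * h τ) ν :=
      (hf'.sub hsub_int).congr (Filter.Eventually.of_forall fun τ => by
        show g (t₀ - τ) * h τ - (g (t₀ - τ) - c) * h τ = c * h τ; ring)
    have hh_int : Integrable h ν :=
      (hch.const_mul c⁻¹).congr (Filter.Eventually.of_forall fun τ => by
        show c⁻¹ * (c * h τ) = h τ
        rw [inv_mul_cancel_left₀ (ne_of_gt hc)])
    have hsplit : ∫ τ in Set.Ioo b t₀, g (t₀ - τ) * h τ
        = (∫ τ in Set.Ioo b t₀, (g (t₀ - τ) - c) * h τ)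
          + ∫ τ in Set.Ioo b t₀, c * h τ := by
      rw [← integral_add hsub_int hch]
      congr 1; funext τ; ring
    have hcint : ∫ τ in Set.Ioo b t₀, c * h τ = c * ∫ τ in Set.Ioo b t₀, h τ :=
      integral_const_mul c h
    have hFTCb : ∫ τ in Set.Ioo b t₀, h τ = v t₀ - v b := by
      have hII : IntervalIntegrable h volume b t₀ :=
        (intervalIntegrable_iff_integrableOn_Ioc_of_le hbt₀.le).2
          ((show IntegrableOn h (Set.Ioo b t₀) volume from hh_int).congr_set_ae
            Ioo_ae_eq_Ioc.symm)
      have hFTC : ∫ τ in b..t₀, h τ = v t₀ - v b := by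
        apply intervalIntegral.integral_eq_sub_of_hasDeriv_right_of_le hbt₀.le
        · exact hv_cont.mono (Set.Icc_subset_Icc (by linarith) ht₀T)
        · intro x hx
          exact ((hv_diff x ⟨by linarith [hx.1], by linarith [hx.2]⟩
            ).hasDerivAt).hasDerivWithinAt
        · exact hII
      rw [← integral_Ioc_eq_integral_Ioo, ← intervalIntegral.integral_of_le hbt₀.le, hFTC]
    have hvb : v t₀ ≤ v b := isMinOn_iff.mp hmin b ⟨hb0.le, by linarith⟩
    have hterm2 : c * ∫ τ in Set.Ioo b t₀, h τ ≤ 0 := by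
      rw [hFTCb]
      exact mul_nonpos_of_nonneg_of_nonpos hc0 (by linarith)
    rw [hsplit, hcint]
    linarith

/-- Extremum principle for the generalized Caputo-type derivative: if `g` is a
nonnegative non-increasing locally integrable kernel, `v ∈ C([0,T])` is
differentiable on `(0,T)` and `D_{(g)}v(t) = ∫₀ᵗ g(t-τ) v'(τ) dτ` is continuous
on `(0,T]`, then at any minimum point `t₀ ∈ (0,T]` of `v` over `[0,T]` we have
`D_{(g)}v(t₀) ≤ 0`. -/
theorem caputo_extremum_principle_min
    (g : ℝ → ℝ) (hg_nonneg : ∀ t : ℝ, 0 < t → 0 ≤ g t)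
    (hg_mono : AntitoneOn g (Set.Ioi (0:ℝ)))
    (hg_int : LocallyIntegrableOn g (Set.Ioi (0:ℝ)))
    (T : ℝ) (hT : 0 < T)
    (v : ℝ → ℝ) (hv_cont : ContinuousOn v (Set.Icc 0 T))
    (hv_diff : ∀ t ∈ Set.Ioo (0:ℝ) T, DifferentiableAt ℝ v t)
    (Dv : ℝ → ℝ)
    (hDv : ∀ t ∈ Set.Ioc (0:ℝ) T,
      Dv t = ∫ τ in (0:ℝ)..t, g (t - τ) * deriv v τ)
    (hDv_int : ∀ t ∈ Set.Ioc (0:ℝ) T,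
      IntervalIntegrable (fun τ => g (t - τ) * deriv v τ) volume 0 t)
    (hDv_cont : ContinuousOn Dv (Set.Ioc (0:ℝ) T))
    (t₀ : ℝ) (ht₀ : t₀ ∈ Set.Ioc (0:ℝ) T)
    (hmin : IsMinOn v (Set.Icc 0 T) t₀) :
    Dv t₀ ≤ 0 := by
  set f : ℝ → ℝ := fun τ => g (t₀ - τ) * deriv v τ with hfdef
  have hf0 : IntervalIntegrable f volume 0 t₀ := hDv_int t₀ ht₀
  have hkey : ∀ b ∈ Set.Ioo (0:ℝ) t₀, Dv t₀ ≤ ∫ τ in (0:ℝ)..b, f τ := by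
    intro b hb
    have h1 : IntervalIntegrable f volume 0 b := by
      apply hf0.mono_set
      rw [Set.uIcc_of_le hb.1.le, Set.uIcc_of_le ht₀.1.le]
      exact Set.Icc_subset_Icc le_rfl hb.2.le
    have h2 : IntervalIntegrable f volume b t₀ := by
      apply hf0.mono_set
      rw [Set.uIcc_of_le hb.2.le, Set.uIcc_of_le ht₀.1.le]
      exact Set.Icc_subset_Icc hb.1.le le_rfl
    have hadd := intervalIntegral.integral_add_adjacent_intervals h1 h2
    have htail : ∫ τ in b..t₀, f τ ≤ 0 := by
      rw [intervalIntegral.integral_of_le hb.2.le, integral_Ioc_eq_integral_Ioo]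
      exact caputo_aux_min g hg_nonneg hg_mono T v hv_cont hv_diff t₀ ht₀ hmin b hb
        (((intervalIntegrable_iff_integrableOn_Ioc_of_le hb.2.le).1 h2).mono_set
          Set.Ioo_subset_Ioc_self)
    rw [hDv t₀ ht₀]
    show (∫ τ in (0:ℝ)..t₀, f τ) ≤ _
    linarith [hadd]
  have h0mem : (0:ℝ) ∈ Set.uIcc 0 t₀ := Set.left_mem_uIcc
  have hcont := intervalIntegral.continuousOn_primitive_interval' hf0 h0mem
  have htends : Filter.Tendsto (fun x => ∫ τ in (0:ℝ)..x, f τ)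
      (nhdsWithin 0 (Set.Ioo 0 t₀)) (nhds 0) := by
    have hc0 := (hcont 0 h0mem).tendsto
    rw [intervalIntegral.integral_same] at hc0
    apply hc0.mono_left
    apply nhdsWithin_mono
    rw [Set.uIcc_of_le ht₀.1.le]
    exact Set.Ioo_subset_Icc_self
  haveI hne : (nhdsWithin (0:ℝ) (Set.Ioo 0 t₀)).NeBot := by
    apply mem_closure_iff_nhdsWithin_neBot.mp
    rw [closure_Ioo (ne_of_lt ht₀.1)]
    exact ⟨le_rfl, ht₀.1.le⟩
  exact ge_of_tendsto htends
    (by filter_upwards [self_mem_nhdsWithin] with b hb using hkey b hb)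
end

section
/- Let λ > 0 and suppose v : [0,T] → ℝ is continuous with v(0) ≤ 0, D_{(g)}v continuous on [0,T], and D_{(g)}v(t) + λ(t)·v(t) = h(t) on (0,T] with h(t) ≤ 0 and λ(t) > 0 continuous. Assume the extremum principle: at any interior maximum point t₀ ∈ (0,T] of v, D_{(g)}v(t₀) ≥ 0. Then v(t) ≤ 0 for all t ∈ [0,T]. -/
open Set

/-- Sign-preservation (scalar form): if `v ∈ C([0,T])` with `v(0) ≤ 0`,
`D_{(g)}v` continuous, `D_{(g)}v(t) + λ(t)v(t) = h(t)` on `(0,T]` with `h ≤ 0`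
and `λ > 0` continuous, and the extremum principle holds (`D_{(g)}v(t₀) ≥ 0` at
any maximum point `t₀ ∈ (0,T]`), then `v ≤ 0` on `[0,T]`. -/
theorem sign_preservation_nonpos
    (T : ℝ) (hT : 0 < T)
    (v Dv lam h : ℝ → ℝ)
    (hv_cont : ContinuousOn v (Set.Icc 0 T))
    (hv0 : v 0 ≤ 0)
    (hDv_cont : ContinuousOn Dv (Set.Icc 0 T))
    (heq : ∀ t ∈ Set.Ioc (0:ℝ) T, Dv t + lam t * v t = h t)
    (hh : ∀ t ∈ Set.Ioc (0:ℝ) T, h t ≤ 0)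
    (hlam_cont : ContinuousOn lam (Set.Icc 0 T))
    (hlam_pos : ∀ t ∈ Set.Icc (0:ℝ) T, 0 < lam t)
    (hext : ∀ t₀ ∈ Set.Ioc (0:ℝ) T, IsMaxOn v (Set.Icc 0 T) t₀ → 0 ≤ Dv t₀) :
    ∀ t ∈ Set.Icc (0:ℝ) T, v t ≤ 0 := by
  obtain ⟨t₀, ht₀, hmax⟩ := (isCompact_Icc (a := (0:ℝ)) (b := T)).exists_isMaxOn
    (Set.nonempty_Icc.2 hT.le) hv_cont
  intro t ht
  have hle : v t ≤ v t₀ := hmax ht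
  by_cases hpos : v t₀ ≤ 0
  · exact hle.trans hpos
  push_neg at hpos
  have ht₀0 : t₀ ≠ 0 := by
    intro h0; rw [h0] at hpos; exact absurd hv0 (not_le.2 hpos)
  have ht₀Ioc : t₀ ∈ Set.Ioc (0:ℝ) T :=
    ⟨lt_of_le_of_ne ht₀.1 (Ne.symm ht₀0), ht₀.2⟩
  have hD : 0 ≤ Dv t₀ := hext t₀ ht₀Ioc hmax
  have hlv : 0 < lam t₀ * v t₀ := mul_pos (hlam_pos t₀ ht₀) hpos
  have : (0:ℝ) < h t₀ := by
    have := heq t₀ ht₀Ioc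
    linarith
  exact absurd (hh t₀ ht₀Ioc) (not_le.2 this)
end

section
/- Under the same structure, if v(0) ≥ 0 and h(t) ≥ 0 on [0,T], with λ(t) > 0 continuous and the extremum principle holding (D_{(g)}v(t₀) ≤ 0 at any interior minimum t₀), then v(t) ≥ 0 for all t ∈ [0,T]. -/
open Set

/-- Sign-preservation (second part): if `v ∈ C([0,T])` with `v(0) ≥ 0`,
`D_{(g)}v` continuous, `D_{(g)}v(t) + λ(t)v(t) = h(t)` on `(0,T]` with `h ≥ 0`
and `λ > 0` continuous, and the extremum principle holds (`D_{(g)}v(t₀) ≤ 0` at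
any minimum point `t₀ ∈ (0,T]`), then `v ≥ 0` on `[0,T]`. -/
theorem sign_preservation_nonneg
    (T : ℝ) (hT : 0 < T)
    (v Dv lam h : ℝ → ℝ)
    (hv_cont : ContinuousOn v (Set.Icc 0 T))
    (hv0 : 0 ≤ v 0)
    (hDv_cont : ContinuousOn Dv (Set.Icc 0 T))
    (heq : ∀ t ∈ Set.Ioc (0:ℝ) T, Dv t + lam t * v t = h t)
    (hh : ∀ t ∈ Set.Ioc (0:ℝ) T, 0 ≤ h t)
    (hlam_cont : ContinuousOn lam (Set.Icc 0 T))
    (hlam_pos : ∀ t ∈ Set.Icc (0:ℝ) T, 0 < lam t)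
    (hext : ∀ t₀ ∈ Set.Ioc (0:ℝ) T, IsMinOn v (Set.Icc 0 T) t₀ → Dv t₀ ≤ 0) :
    ∀ t ∈ Set.Icc (0:ℝ) T, 0 ≤ v t := by
  obtain ⟨t₀, ht₀mem, ht₀min⟩ :=
    (isCompact_Icc (a := (0:ℝ)) (b := T)).exists_isMinOn
      (Set.nonempty_Icc.mpr hT.le) hv_cont
  intro t ht
  have hmin : v t₀ ≤ v t := ht₀min ht
  by_contra hneg
  push_neg at hneg
  have hvt₀ : v t₀ < 0 := lt_of_le_of_lt hmin hneg
  have ht₀pos : 0 < t₀ := by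
    rcases lt_or_eq_of_le ht₀mem.1 with h' | h'
    · exact h'
    · exact absurd (h' ▸ hvt₀) (not_lt.mpr hv0)
  have ht₀Ioc : t₀ ∈ Set.Ioc (0:ℝ) T := ⟨ht₀pos, ht₀mem.2⟩
  have hD : Dv t₀ ≤ 0 := hext t₀ ht₀Ioc ht₀min
  have hlv : lam t₀ * v t₀ < 0 :=
    mul_neg_of_pos_of_neg (hlam_pos t₀ ht₀mem) hvt₀
  have : h t₀ < 0 := by
    rw [← heq t₀ ht₀Ioc]; linarith
  exact absurd (hh t₀ ht₀Ioc) (not_le.mpr this)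
end
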